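/- There exists a signed graph (G,σ) whose underlying graph G contains none of P₄ (the path on 4 vertices), P₃ + P₂ (the disjoint union of a path on 3 vertices and an edge), and P₂ + P₂ + P₂ (the disjoint union of three edges) as an induced subgraph, yet ψ(G,σ) > ω(G,σ) and ψ(G,σ) > χ(G,σ); in particular, (G,σ) is neither (ψ,ω)-perfect nor (ψ,χ)-perfect. -/

import Mathlib

open SimpleGraph

/-- A signature on a graph: a symmetric assignment of signs (`1` or `-1`) to pairs of
vertices (only the values on edges are relevant). -/
def IsSignature {V : Type*} (σ : V → V → ℤ) : Prop :=
  (∀ u v, σ u v = σ v u) ∧ (∀ u v, σ u v = 1 ∨ σ u v = -1)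

/-- `σ'` is obtained from `σ` by switching a set of vertices: every vertex gets a
switching value `±1`, and the sign of an edge is multiplied by the values at its ends. -/
def SwitchEquiv {V : Type*} (σ σ' : V → V → ℤ) : Prop :=
  ∃ s : V → ℤ, (∀ v, s v = 1 ∨ s v = -1) ∧ ∀ u v, σ' u v = s u * s v * σ u v

/-- The colour set `M_k`, as a set of integers: `{±1, …, ±n}` if `k = 2n`, and
`{-n, …, -1, 0, 1, …, n}` if `k = 2n+1` (colour `±0` is represented by `0`). -/
def colourSet (k : ℕ) : Set ℤ :=
  if Even k then {i | i ≠ 0 ∧ i.natAbs ≤ k / 2} else {i | i.natAbs ≤ k / 2}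

/-- A proper `k`-colouring of the signed graph `(G, σ)`: colours come from `M_k` and,
for each edge `uv`, `φ u ≠ σ(uv) · φ v`. -/
def IsProperColouring {V : Type*} (G : SimpleGraph V) (σ : V → V → ℤ) (k : ℕ)
    (φ : V → ℤ) : Prop :=
  (∀ v, φ v ∈ colourSet k) ∧ ∀ u v, G.Adj u v → φ u ≠ σ u v * φ v

/-- The sign of an integer for the purpose of switching: `-1` for negative colours,
`1` otherwise. -/
def isgn (x : ℤ) : ℤ := if x < 0 then -1 else 1

/-- The sign of the edge `uv` after switching every vertex whose colour is negative. -/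
def redSign {V : Type*} (σ : V → V → ℤ) (φ : V → ℤ) (u v : V) : ℤ :=
  isgn (φ u) * isgn (φ v) * σ u v

/-- After switching all negatively-coloured vertices and taking absolute values of
colours, there is an edge of `(G, σ)` whose ends get values `i` and `j` and whose
resulting sign is `s`. -/
def HasEdgeType {V : Type*} (G : SimpleGraph V) (σ : V → V → ℤ) (φ : V → ℤ)
    (i j : ℕ) (s : ℤ) : Prop :=
  ∃ u v, G.Adj u v ∧ (φ u).natAbs = i ∧ (φ v).natAbs = j ∧ redSign σ φ u v = s

/-- A complete `k`-colouring of the signed graph `(G, σ)`. -/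
def IsCompleteColouring {V : Type*} (G : SimpleGraph V) (σ : V → V → ℤ) (k : ℕ)
    (φ : V → ℤ) : Prop :=
  IsProperColouring G σ k φ ∧
  (∀ i j : ℕ, (i : ℤ) ∈ colourSet k → (j : ℤ) ∈ colourSet k → i ≠ j →
    HasEdgeType G σ φ i j 1 ∧ HasEdgeType G σ φ i j (-1)) ∧
  (∀ i : ℕ, 1 ≤ i → (i : ℤ) ∈ colourSet k → HasEdgeType G σ φ i i (-1))

/-- Some signed graph equivalent to `(G, σ)` admits a complete `k`-colouring. -/
def AdmitsComplete {V : Type*} (G : SimpleGraph V) (σ : V → V → ℤ) (k : ℕ) : Prop :=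
  ∃ σ', IsSignature σ' ∧ SwitchEquiv σ σ' ∧ ∃ φ, IsCompleteColouring G σ' k φ

/-- The achromatic number of the signed graph `(G, σ)`: the largest `k` such that some
signed graph equivalent to `(G, σ)` admits a complete `k`-colouring. -/
noncomputable def psi {V : Type*} (G : SimpleGraph V) (σ : V → V → ℤ) : ℕ :=
  sSup {k | AdmitsComplete G σ k}

/-- The chromatic number of the signed graph `(G, σ)`: the smallest `k` such that
`(G, σ)` admits a proper `k`-colouring. -/
noncomputable def chi {V : Type*} (G : SimpleGraph V) (σ : V → V → ℤ) : ℕ :=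
  sInf {k | ∃ φ, IsProperColouring G σ k φ}

/-- The path `P₄` on four vertices. -/
def patP4 : SimpleGraph (Fin 4) := SimpleGraph.pathGraph 4

/-- The disjoint union `P₃ + P₂` of a path on three vertices and an edge. -/
def patP3P2 : SimpleGraph (Fin 5) :=
  SimpleGraph.fromRel (fun i j =>
    (i.val = 0 ∧ j.val = 1) ∨ (i.val = 1 ∧ j.val = 2) ∨ (i.val = 3 ∧ j.val = 4))

/-- The disjoint union `P₂ + P₂ + P₂` of three edges. -/
def patP2P2P2 : SimpleGraph (Fin 6) :=
  SimpleGraph.fromRel (fun i j =>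
    (i.val = 0 ∧ j.val = 1) ∨ (i.val = 2 ∧ j.val = 3) ∨ (i.val = 4 ∧ j.val = 5))

/-- `G` contains an induced copy of the pattern graph `P`. -/
def HasInducedCopy {V : Type*} {m : ℕ} (G : SimpleGraph V) (P : SimpleGraph (Fin m)) :
    Prop :=
  ∃ f : Fin m → V, Function.Injective f ∧ ∀ i j, G.Adj (f i) (f j) ↔ P.Adj i j


/-! The example is the paw: the triangle `0 2 3` with the pendant edge `0 1`, where every edge
except `02` is negative. Its clique number is `3`, and colouring the apex `±0` and the other
three vertices `+1` is proper, so `χ ≤ 3`. Colouring `0, 1` by `1` and `2, 3` by `2` is a complete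
`4`-colouring: the negative edges `01` and `23` are the negative loops, `02` and `03` give the two
signs between `1` and `2`. A complete colouring with at least five colours uses three absolute
values, so it needs six edges of pairwise different (colour pair, sign) types, while the paw has
only four edges. Hence `ψ = 4`. The forbidden induced subgraphs are excluded by inspection for
`P₄` and by counting vertices for the other two. -/

lemma natCast_mem_colourSet {k i : ℕ} :
    (i : ℤ) ∈ colourSet k ↔ (Even k → i ≠ 0) ∧ i ≤ k / 2 := by
  unfold colourSet
  split_ifs with hk <;> simp [hk]

lemma switchEquiv_refl {V : Type*} (σ : V → V → ℤ) : SwitchEquiv σ σ :=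
  ⟨fun _ => 1, fun _ => Or.inl rfl, fun _ _ => by simp⟩

lemma chi_le {V : Type*} {G : SimpleGraph V} {σ : V → V → ℤ} {k : ℕ} {φ : V → ℤ}
    (hφ : IsProperColouring G σ k φ) : chi G σ ≤ k :=
  Nat.sInf_le ⟨φ, hφ⟩

lemma not_hasInducedCopy_of_card_lt {V : Type*} [Fintype V] {m : ℕ} {G : SimpleGraph V}
    {P : SimpleGraph (Fin m)} (h : Fintype.card V < m) : ¬HasInducedCopy G P := by
  rintro ⟨f, hf, -⟩
  simpa using (Fintype.card_le_of_injective f hf).trans_lt h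

lemma cliqueNum_lt_card_of_not_adj {V : Type*} [Fintype V] {G : SimpleGraph V} {u v : V}
    (huv : u ≠ v) (h : ¬G.Adj u v) : G.cliqueNum < Fintype.card V := by
  obtain ⟨s, hs⟩ := G.exists_isNClique_cliqueNum
  refine hs.card_eq ▸ (Finset.card_le_univ s).lt_of_ne fun hcard => h ?_
  rw [Finset.card_eq_iff_eq_univ] at hcard
  exact hs.isClique (by simp [hcard]) (by simp [hcard]) huv

section Comap

variable {V W : Type*} {G : SimpleGraph V} {H : SimpleGraph W} {σ : W → W → ℤ} {k : ℕ}
  {φ : W → ℤ}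

lemma IsProperColouring.comap (f : G →g H) (hφ : IsProperColouring H σ k φ) :
    IsProperColouring G (fun u v => σ (f u) (f v)) k (φ ∘ f) :=
  ⟨fun v => hφ.1 (f v), fun _ _ huv => hφ.2 _ _ (f.map_adj huv)⟩

lemma HasEdgeType.comap (f : G ≃g H) {i j : ℕ} {s : ℤ} (h : HasEdgeType H σ φ i j s) :
    HasEdgeType G (fun u v => σ (f u) (f v)) (φ ∘ f) i j s := by
  obtain ⟨u, v, huv, hu, hv, hs⟩ := h
  exact ⟨f.symm u, f.symm v, f.symm.map_adj_iff.2 huv, by simpa using hu, by simpa using hv,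
    by simpa [redSign] using hs⟩

lemma AdmitsComplete.comap (f : G ≃g H) (h : AdmitsComplete H σ k) :
    AdmitsComplete G (fun u v => σ (f u) (f v)) k := by
  obtain ⟨σ', ⟨hsymm, hsign⟩, ⟨t, ht, hσ'⟩, φ, hproper, hpairs, hloops⟩ := h
  refine ⟨fun u v => σ' (f u) (f v), ⟨fun _ _ => hsymm _ _, fun _ _ => hsign _ _⟩,
    ⟨t ∘ f, fun _ => ht _, fun _ _ => hσ' _ _⟩, φ ∘ f,
    hproper.comap f.toHom, fun i j hi hj hij => ?_, fun i hi hik => (hloops i hi hik).comap f⟩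
  exact ⟨(hpairs i j hi hj hij).1.comap f, (hpairs i j hi hj hij).2.comap f⟩

lemma psi_comap (f : G ≃g H) (σ : W → W → ℤ) :
    psi G (fun u v => σ (f u) (f v)) = psi H σ := by
  refine congrArg sSup (Set.ext fun k => ⟨fun h => ?_, AdmitsComplete.comap f⟩)
  simpa using h.comap f.symm

end Comap

lemma psi_induce_univ {V : Type*} (G : SimpleGraph V) (σ : V → V → ℤ) :
    psi (G.induce Set.univ) (fun a b => σ a.1 b.1) = psi G σ :=
  psi_comap (induceUnivIso G) σ

section EdgeCount

variable {V : Type*} [Fintype V] {G : SimpleGraph V} [DecidableRel G.Adj] {σ : V → V → ℤ}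
  {φ : V → ℤ}

lemma card_le_card_edgeFinset_of_hasEdgeType (hσ : ∀ u v, σ u v = σ v u)
    (T : Finset (Sym2 ℕ × ℤ))
    (hT : ∀ t ∈ T, ∃ i j s, t = (s(i, j), s) ∧ HasEdgeType G σ φ i j s) :
    T.card ≤ G.edgeFinset.card := by
  let edgeType : Sym2 V → Sym2 ℕ × ℤ := Sym2.lift
    ⟨fun u v => (s((φ u).natAbs, (φ v).natAbs), redSign σ φ u v), fun u v => by
      simp only [redSign, hσ u v, Sym2.eq_swap, Prod.mk.injEq, true_and]
      ring⟩
  refine (Finset.card_le_card fun t ht => ?_).trans (Finset.card_image_le (f := edgeType))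
  obtain ⟨i, j, s, rfl, u, v, huv, rfl, rfl, rfl⟩ := hT t ht
  exact Finset.mem_image.2 ⟨s(u, v), by simpa using huv, rfl⟩

lemma IsCompleteColouring.six_le_card_edgeFinset_of_lt (hσ : ∀ u v, σ u v = σ v u) {k : ℕ}
    (hφ : IsCompleteColouring G σ k φ) {a b c : ℕ} (hab : a < b) (hbc : b < c)
    (ha : (a : ℤ) ∈ colourSet k) (hb : (b : ℤ) ∈ colourSet k) (hc : (c : ℤ) ∈ colourSet k) :
    6 ≤ G.edgeFinset.card := by
  let T : Finset (Sym2 ℕ × ℤ) :=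
    {(s(a, b), 1), (s(a, b), -1), (s(a, c), 1), (s(a, c), -1), (s(b, c), 1), (s(b, c), -1)}
  have hcard : T.card = 6 := by
    repeat rw [Finset.card_insert_of_notMem (by simp <;> omega)]
    rfl
  have pab := hφ.2.1 a b ha hb hab.ne
  have pac := hφ.2.1 a c ha hc (hab.trans hbc).ne
  have pbc := hφ.2.1 b c hb hc hbc.ne
  refine hcard ▸ card_le_card_edgeFinset_of_hasEdgeType (φ := φ) hσ T fun t ht => ?_
  simp only [T, Finset.mem_insert, Finset.mem_singleton] at ht
  rcases ht with rfl | rfl | rfl | rfl | rfl | rfl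
  exacts [⟨a, b, 1, rfl, pab.1⟩, ⟨a, b, -1, rfl, pab.2⟩, ⟨a, c, 1, rfl, pac.1⟩,
    ⟨a, c, -1, rfl, pac.2⟩, ⟨b, c, 1, rfl, pbc.1⟩, ⟨b, c, -1, rfl, pbc.2⟩]

lemma IsCompleteColouring.six_le_card_edgeFinset (hσ : ∀ u v, σ u v = σ v u) {k : ℕ}
    (hφ : IsCompleteColouring G σ k φ) (hk : 5 ≤ k) : 6 ≤ G.edgeFinset.card := by
  rcases Nat.even_or_odd k with heven | hodd
  · have hmem (i : ℕ) (hi : 1 ≤ i) (hi' : i ≤ 3) : (i : ℤ) ∈ colourSet k :=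
      natCast_mem_colourSet.2 ⟨fun _ => by omega, by obtain ⟨r, rfl⟩ := heven; omega⟩
    exact hφ.six_le_card_edgeFinset_of_lt hσ (a := 1) (b := 2) (c := 3) (by omega) (by omega)
      (hmem 1 le_rfl (by omega)) (hmem 2 (by omega) (by omega)) (hmem 3 (by omega) le_rfl)
  · have hmem (i : ℕ) (hi : i ≤ 2) : (i : ℤ) ∈ colourSet k :=
      natCast_mem_colourSet.2 ⟨fun h => absurd h (Nat.not_even_iff_odd.2 hodd), by omega⟩
    exact hφ.six_le_card_edgeFinset_of_lt hσ (a := 0) (b := 1) (c := 2) (by omega) (by omega)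
      (hmem 0 (by omega)) (hmem 1 (by omega)) (hmem 2 le_rfl)

lemma AdmitsComplete.le_four {k : ℕ} (h : AdmitsComplete G σ k)
    (hG : G.edgeFinset.card < 6) : k ≤ 4 := by
  obtain ⟨σ', ⟨hsymm, -⟩, -, φ, hφ⟩ := h
  by_contra! hk
  exact (hφ.six_le_card_edgeFinset hsymm hk).not_gt hG

end EdgeCount

def paw : SimpleGraph (Fin 4) := SimpleGraph.fromRel fun i j =>
  (i = 0 ∧ j = 1) ∨ (i = 0 ∧ j = 2) ∨ (i = 0 ∧ j = 3) ∨ (i = 2 ∧ j = 3)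

instance : DecidableRel paw.Adj := fun _ _ => decidable_of_iff _ (fromRel_adj _ _ _).symm

instance : DecidableRel patP4.Adj := fun _ _ => decidable_of_iff _ pathGraph_adj.symm

def pawSign (u v : Fin 4) : ℤ := if s(u, v) = s(0, 2) then 1 else -1

def pawProperColouring : Fin 4 → ℕ := ![0, 1, 1, 1]

def pawCompleteColouring : Fin 4 → ℕ := ![1, 1, 2, 2]

lemma pawSign_isSignature : IsSignature pawSign := by
  constructor <;> decide

set_option maxRecDepth 10000 in
lemma paw_not_hasInducedCopy_patP4 : ¬HasInducedCopy paw patP4 := by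
  unfold HasInducedCopy
  decide

lemma cliqueNum_paw_lt_four : paw.cliqueNum < 4 :=
  cliqueNum_lt_card_of_not_adj (u := 1) (v := 2) (by decide) (by decide)

lemma isProperColouring_paw :
    IsProperColouring paw pawSign 3 fun v => (pawProperColouring v : ℤ) :=
  ⟨fun v => natCast_mem_colourSet.2 (by revert v; decide), by decide⟩

lemma isCompleteColouring_paw :
    IsCompleteColouring paw pawSign 4 fun v => (pawCompleteColouring v : ℤ) := by
  have hmem {i : ℕ} (hi : (i : ℤ) ∈ colourSet 4) : i = 1 ∨ i = 2 := by
    obtain ⟨hne, hle⟩ := natCast_mem_colourSet.1 hi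
    have := hne (by decide)
    omega
  refine ⟨⟨fun v => natCast_mem_colourSet.2 (by revert v; decide), by decide⟩,
    fun i j hi hj hij => ?_, fun i _ hi => ?_⟩
  · rcases hmem hi with rfl | rfl <;> rcases hmem hj with rfl | rfl <;>
      first | exact absurd rfl hij | (unfold HasEdgeType redSign isgn; decide)
  · rcases hmem hi with rfl | rfl <;> (unfold HasEdgeType redSign isgn; decide)

lemma psi_paw : psi paw pawSign = 4 :=
  IsGreatest.csSup_eq ⟨⟨pawSign, pawSign_isSignature, switchEquiv_refl _, _,
    isCompleteColouring_paw⟩, fun _ hk => hk.le_four (by decide)⟩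

/-- There is a signed graph whose underlying graph has no induced `P₄`,
`P₃ + P₂`, or `P₂ + P₂ + P₂`, yet `ψ > ω` and `ψ > χ`; in particular it is neither
`(ψ,ω)`-perfect nor `(ψ,χ)`-perfect. -/
theorem statement18 :
    ∃ (n : ℕ) (G : SimpleGraph (Fin n)) (σ : Fin n → Fin n → ℤ),
      IsSignature σ ∧
      ¬HasInducedCopy G patP4 ∧ ¬HasInducedCopy G patP3P2 ∧ ¬HasInducedCopy G patP2P2P2 ∧
      G.cliqueNum < psi G σ ∧ chi G σ < psi G σ ∧
      ¬(∀ s : Set (Fin n),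
          psi (G.induce s) (fun a b => σ a.1 b.1) = (G.induce s).cliqueNum) ∧
      ¬(∀ s : Set (Fin n),
          psi (G.induce s) (fun a b => σ a.1 b.1) =
            chi (G.induce s) (fun a b => σ a.1 b.1)) := by
  have hω := cliqueNum_paw_lt_four
  have hψ := psi_paw
  have hχ := chi_le isProperColouring_paw
  have hχ_univ : chi (paw.induce Set.univ) (fun a b => pawSign a.1 b.1) ≤ 3 :=
    chi_le (isProperColouring_paw.comap (induceUnivIso paw).toHom)
  have hω_univ := cliqueNum_induce_le (G := paw) Set.univ
  have hψ_univ := psi_induce_univ paw pawSign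
  refine ⟨4, paw, pawSign, pawSign_isSignature, paw_not_hasInducedCopy_patP4,
    not_hasInducedCopy_of_card_lt (by simp), not_hasInducedCopy_of_card_lt (by simp),
    by omega, by omega, fun h => ?_, fun h => ?_⟩
  · have := h Set.univ
    omega
  · have := h Set.univ
    omega
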